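/- Let 𝒜 ⊆ M_n be a *-subalgebra with identity, U a subspace of hermitian matrices with id ∈ U, and for projections p define K(p) = p'𝒜⁺p' ∩ U with p' = id − p. Then a projection p ∈ 𝒜 is a ground projection of some element of U (or zero) if and only if p is the greatest element, in the Löwner order, of the set {q projection in 𝒜 | K(q) = K(p)}. -/

import Mathlib

open Matrix
open scoped ComplexOrder

/-- The smallest eigenvalue (ground energy) of a matrix. -/
noncomputable def minEig {n : ℕ} (a : Matrix (Fin n) (Fin n) ℂ) : ℝ :=
  sInf {c : ℝ | ∃ v : Fin n → ℂ, v ≠ 0 ∧ a.mulVec v = (c : ℂ) • v}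

/-- The ground space of a hermitian matrix: the eigenspace of its smallest eigenvalue. -/
noncomputable def groundSpaceSet {n : ℕ} (a : Matrix (Fin n) (Fin n) ℂ) :
    Set (Fin n → ℂ) :=
  {v | a.mulVec v = (minEig a : ℂ) • v}

/-- The cone `K(p) = p'𝒜⁺p' ∩ U`, `p' = 1 - p`. -/
def coneK {n : ℕ} (𝒜 : StarSubalgebra ℂ (Matrix (Fin n) (Fin n) ℂ))
    (U : Submodule ℝ (Matrix (Fin n) (Fin n) ℂ))
    (p : Matrix (Fin n) (Fin n) ℂ) : Set (Matrix (Fin n) (Fin n) ℂ) :=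
  {u | u ∈ U ∧ ∃ a : Matrix (Fin n) (Fin n) ℂ, a ∈ 𝒜 ∧ a.PosSemidef ∧
    u = (1 - p) * a * (1 - p)}

/-!
Elements of `K(p)` are exactly the positive semidefinite `w ∈ U` with `w * p = 0`. If `p` projects
onto the ground space of `u ∈ U`, then `v = u - λ_min(u)` lies in `K(p)` and its kernel is the
range of `p` (for `p = 0` take `v = 1`); any projection `q` with `K(q) = K(p)` has `v * q = 0`,
so its range lies in that of `p`, i.e. `q ≤ p`. Conversely, `K(p)` is closed under addition and
`ker (a + b) = ker a ⊓ ker b` for positive `a, b`, so some `u ∈ K(p)` has the least kernel among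
all elements of `K(p)`. The projection `q` onto `ker u` is a continuous function of `u`, hence
lies in the (closed) algebra `𝒜`, and `K(q) = K(p)`. Maximality gives `q ≤ p`, while `u * p = 0`
gives `p ≤ q`; so `p` projects onto `ker u`, which is the ground space of `u` unless it is zero.
-/

open scoped MatrixOrder

section Projection

variable {ι : Type*} [Fintype ι] [DecidableEq ι]

lemma isClosed_starSubalgebra (𝒜 : StarSubalgebra ℂ (Matrix ι ι ℂ)) :
    IsClosed (𝒜 : Set (Matrix ι ι ℂ)) :=
  Submodule.closed_of_finiteDimensional 𝒜.toSubalgebra.toSubmodule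

/-- The orthogonal projection onto the kernel of a hermitian matrix `u`: since `0⁻¹ = 0`, the
function `x ↦ x⁻¹ * x` is the indicator of `x ≠ 0`. -/
noncomputable def kernelProjection (u : Matrix ι ι ℂ) : Matrix ι ι ℂ :=
  1 - cfc (fun x : ℝ => x⁻¹ * x) u

variable {u : Matrix ι ι ℂ}

lemma kernelProjection_mem {𝒜 : StarSubalgebra ℂ (Matrix ι ι ℂ)} (hu : u ∈ 𝒜) :
    kernelProjection u ∈ 𝒜 :=
  haveI := isClosed_starSubalgebra 𝒜
  sub_mem (one_mem 𝒜) (cfc_mem (𝕜' := ℂ) _ hu)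

lemma cfc_inv_mul_self (hu : u.IsHermitian) :
    cfc (fun x : ℝ => x⁻¹ * x) u = cfc (·⁻¹ : ℝ → ℝ) u * u := by
  rw [cfc_mul _ _ u (u.finite_real_spectrum.continuousOn _), cfc_id' ℝ u hu.isSelfAdjoint]

lemma mul_kernelProjection (hu : u.IsHermitian) : u * kernelProjection u = 0 := by
  have hcancel : u * cfc (fun x : ℝ => x⁻¹ * x) u = u := by
    conv_lhs => enter [1]; rw [← cfc_id' ℝ u hu.isSelfAdjoint]
    rw [← cfc_mul _ _ u (u.finite_real_spectrum.continuousOn _)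
      (u.finite_real_spectrum.continuousOn _)]
    simp_rw [← mul_assoc, mul_inv_mul_cancel]
    exact cfc_id' ℝ u hu.isSelfAdjoint
  rw [kernelProjection, mul_sub, mul_one, hcancel, sub_self]

lemma kernelProjection_mulVec (hu : u.IsHermitian) {x : ι → ℂ} (hx : u *ᵥ x = 0) :
    kernelProjection u *ᵥ x = x := by
  rw [kernelProjection, sub_mulVec, one_mulVec, cfc_inv_mul_self hu, ← mulVec_mulVec, hx,
    mulVec_zero, sub_zero]

lemma range_kernelProjection (hu : u.IsHermitian) :
    Set.range (kernelProjection u).mulVec = {x | u *ᵥ x = 0} := by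
  ext x
  refine ⟨?_, fun hx => ⟨x, kernelProjection_mulVec hu hx⟩⟩
  rintro ⟨y, rfl⟩
  rw [Set.mem_ofPred_eq, mulVec_mulVec, mul_kernelProjection hu, zero_mulVec]

lemma isStarProjection_kernelProjection (hu : u.IsHermitian) :
    IsStarProjection (kernelProjection u) where
  isIdempotentElem := by
    change kernelProjection u * kernelProjection u = kernelProjection u
    nth_rewrite 1 [kernelProjection]
    rw [cfc_inv_mul_self hu, sub_mul, one_mul, mul_assoc, mul_kernelProjection hu, mul_zero,
      sub_zero]
  isSelfAdjoint := (IsSelfAdjoint.one _).sub (cfc_predicate _ u)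

lemma mul_eq_right_of_mulVec_mem_range {p q : Matrix ι ι ℂ} (hp : IsIdempotentElem p)
    (h : ∀ x, q *ᵥ x ∈ Set.range p.mulVec) : p * q = q := by
  refine ext_of_mulVec_single fun i => ?_
  obtain ⟨y, hy⟩ := h (Pi.single i 1)
  rw [← mulVec_mulVec, ← hy, mulVec_mulVec, hp.eq]

end Projection

section PosSemidefKernel

variable {𝕜 ι : Type*} [RCLike 𝕜] [Fintype ι]

lemma Matrix.PosSemidef.ker_add {a b : Matrix ι ι 𝕜} (ha : a.PosSemidef) (hb : b.PosSemidef) :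
    LinearMap.ker (a + b).mulVecLin = LinearMap.ker a.mulVecLin ⊓ LinearMap.ker b.mulVecLin := by
  ext x
  simp only [Submodule.mem_inf, LinearMap.mem_ker, mulVecLin_apply, add_mulVec]
  refine ⟨fun h => ?_, fun ⟨hax, hbx⟩ => by rw [hax, hbx, add_zero]⟩
  have hsum : star x ⬝ᵥ a *ᵥ x + star x ⬝ᵥ b *ᵥ x = 0 := by
    rw [← dotProduct_add, h, dotProduct_zero]
  obtain ⟨hax, hbx⟩ := (add_eq_zero_iff_of_nonneg (ha.dotProduct_mulVec_nonneg x)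
    (hb.dotProduct_mulVec_nonneg x)).mp hsum
  exact ⟨(ha.dotProduct_mulVec_zero_iff x).mp hax, (hb.dotProduct_mulVec_zero_iff x).mp hbx⟩

lemma exists_ker_le_ker_of_add_mem {S : Set (Matrix ι ι 𝕜)} (hS : ∀ a ∈ S, a.PosSemidef)
    (hadd : ∀ a ∈ S, ∀ b ∈ S, a + b ∈ S) (hne : S.Nonempty) :
    ∃ a ∈ S, ∀ b ∈ S, LinearMap.ker a.mulVecLin ≤ LinearMap.ker b.mulVecLin := by
  obtain ⟨_, ⟨a, ha, rfl⟩, hmin⟩ :=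
    wellFounded_lt.has_min ((fun a : Matrix ι ι 𝕜 => LinearMap.ker a.mulVecLin) '' S)
      (hne.image _)
  refine ⟨a, ha, fun b hb => ?_⟩
  have hker := (hS a ha).ker_add (hS b hb)
  have heq : LinearMap.ker (a + b).mulVecLin = LinearMap.ker a.mulVecLin :=
    (hker ▸ inf_le_left).eq_of_not_lt (hmin _ ⟨a + b, hadd a ha b hb, rfl⟩)
  exact heq ▸ hker ▸ inf_le_right

end PosSemidefKernel

section GroundSpace

variable {n : ℕ} {u : Matrix (Fin n) (Fin n) ℂ}

lemma setOf_eigenvalue_eq_spectrum (u : Matrix (Fin n) (Fin n) ℂ) :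
    {c : ℝ | ∃ v : Fin n → ℂ, v ≠ 0 ∧ u.mulVec v = (c : ℂ) • v} = spectrum ℝ u := by
  ext c
  rw [Set.mem_ofPred_eq, spectrum.mem_iff, isUnit_iff_isUnit_det, isUnit_iff_ne_zero, not_not,
    ← exists_mulVec_eq_zero_iff]
  simp [sub_mulVec, Algebra.algebraMap_eq_smul_one, sub_eq_zero, eq_comm, smul_mulVec]

lemma minEig_eq_sInf_spectrum (u : Matrix (Fin n) (Fin n) ℂ) : minEig u = sInf (spectrum ℝ u) := by
  rw [minEig, setOf_eigenvalue_eq_spectrum]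

lemma Matrix.IsHermitian.posSemidef_sub_minEig_smul_one (hu : u.IsHermitian) :
    (u - (minEig u : ℂ) • 1).PosSemidef := by
  have : algebraMap ℝ _ (minEig u) ≤ u :=
    (algebraMap_le_iff_le_spectrum hu.isSelfAdjoint).mpr fun x hx => by
      rw [minEig_eq_sInf_spectrum]
      exact csInf_le u.finite_real_spectrum.bddBelow hx
  simpa [Matrix.le_iff, Algebra.algebraMap_eq_smul_one] using this

lemma Matrix.PosSemidef.minEig_eq_zero (hu : u.PosSemidef) {x : Fin n → ℂ} (hx : x ≠ 0)
    (hux : u *ᵥ x = 0) : minEig u = 0 := by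
  rw [minEig_eq_sInf_spectrum, ← setOf_eigenvalue_eq_spectrum]
  refine IsLeast.csInf_eq ⟨⟨x, hx, by simp [hux]⟩, fun c hc => ?_⟩
  rw [setOf_eigenvalue_eq_spectrum] at hc
  exact spectrum_nonneg_of_nonneg hu.nonneg hc

lemma eq_zero_or_range_eq_groundSpaceSet {p : Matrix (Fin n) (Fin n) ℂ} (hu : u.PosSemidef)
    (hp : Set.range p.mulVec = {x | u *ᵥ x = 0}) :
    p = 0 ∨ Set.range p.mulVec = groundSpaceSet u := by
  by_cases hker : ∃ x ≠ 0, u *ᵥ x = 0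
  · obtain ⟨x, hx, hux⟩ := hker
    right
    simp [hp, groundSpaceSet, hu.minEig_eq_zero hx hux]
  · left
    refine ext_of_mulVec_single fun i => ?_
    rw [zero_mulVec]
    by_contra hpi
    exact hker ⟨_, hpi, hp.subset ⟨_, rfl⟩⟩

end GroundSpace

section Cone

variable {n : ℕ} {𝒜 : StarSubalgebra ℂ (Matrix (Fin n) (Fin n) ℂ)}
  {U : Submodule ℝ (Matrix (Fin n) (Fin n) ℂ)} {p q u : Matrix (Fin n) (Fin n) ℂ}

lemma mem_coneK_iff (hU : ∀ u ∈ U, u ∈ 𝒜) (hp : IsStarProjection p) :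
    u ∈ coneK 𝒜 U p ↔ u ∈ U ∧ u.PosSemidef ∧ u * p = 0 := by
  have hp' : (1 - p)ᴴ = 1 - p := hp.one_sub.isSelfAdjoint
  constructor
  · rintro ⟨hu, a, -, ha, rfl⟩
    have hpsd := ha.conjTranspose_mul_mul_same (1 - p)
    rw [hp'] at hpsd
    exact ⟨hu, hpsd, by rw [mul_assoc, hp.one_sub_mul_self, mul_zero]⟩
  · rintro ⟨hu, hpsd, hup⟩
    have hpu : p * u = 0 := by
      simpa [hp.isSelfAdjoint.star_eq, hpsd.isHermitian.isSelfAdjoint.star_eq]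
        using congrArg star hup
    refine ⟨hu, u, hU u hu, hpsd, ?_⟩
    rw [sub_mul, one_mul, hpu, sub_zero, mul_sub, mul_one, hup, sub_zero]

lemma add_mem_coneK (hU : ∀ u ∈ U, u ∈ 𝒜) (hp : IsStarProjection p)
    {v w : Matrix (Fin n) (Fin n) ℂ} (hv : v ∈ coneK 𝒜 U p) (hw : w ∈ coneK 𝒜 U p) :
    v + w ∈ coneK 𝒜 U p := by
  rw [mem_coneK_iff hU hp] at *
  exact ⟨add_mem hv.1 hw.1, hv.2.1.add hw.2.1, by rw [add_mul, hv.2.2, hw.2.2, add_zero]⟩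

lemma le_of_coneK_eq (hU : ∀ u ∈ U, u ∈ 𝒜) (hp : IsStarProjection p) (hq : IsStarProjection q)
    {v : Matrix (Fin n) (Fin n) ℂ} (hv : v ∈ coneK 𝒜 U p)
    (hker : ∀ x, v *ᵥ x = 0 → x ∈ Set.range p.mulVec) (hK : coneK 𝒜 U q = coneK 𝒜 U p) :
    q ≤ p := by
  have hvq : v * q = 0 := ((mem_coneK_iff hU hq).mp (hK ▸ hv)).2.2
  refine hq.le_of_mul_eq_right hp (mul_eq_right_of_mulVec_mem_range hp.isIdempotentElem
    fun x => hker _ ?_)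
  rw [mulVec_mulVec, hvq, zero_mulVec]

lemma exists_mem_coneK_of_range_eq_groundSpaceSet (hU : ∀ u ∈ U, u ∈ 𝒜) (h1 : 1 ∈ U)
    (hp : IsStarProjection p) (hu : u ∈ U) (huH : u.IsHermitian)
    (hrange : Set.range p.mulVec = groundSpaceSet u) :
    ∃ v ∈ coneK 𝒜 U p, ∀ x, v *ᵥ x = 0 → x ∈ Set.range p.mulVec := by
  have hker : ∀ x, (u - (minEig u : ℂ) • 1) *ᵥ x = 0 ↔ x ∈ Set.range p.mulVec := fun x => by
    rw [hrange, groundSpaceSet, Set.mem_ofPred_eq, sub_mulVec, smul_mulVec, one_mulVec,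
      sub_eq_zero]
  refine ⟨u - (minEig u : ℂ) • 1, (mem_coneK_iff hU hp).mpr
    ⟨?_, huH.posSemidef_sub_minEig_smul_one, ?_⟩, fun x => (hker x).mp⟩
  · exact sub_mem hu
      (Complex.coe_smul (minEig u) (1 : Matrix (Fin n) (Fin n) ℂ) ▸ U.smul_mem _ h1)
  · exact ext_of_mulVec_single fun i => by
      rw [← mulVec_mulVec, (hker _).mpr ⟨_, rfl⟩, zero_mulVec]

lemma kernelProjection_mul_eq (hu : u.IsHermitian) (hup : u * p = 0) :
    kernelProjection u * p = p :=
  ext_of_mulVec_single fun i => by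
    rw [← mulVec_mulVec, kernelProjection_mulVec hu (by rw [mulVec_mulVec, hup, zero_mulVec])]

lemma coneK_kernelProjection_eq (hU : ∀ u ∈ U, u ∈ 𝒜) (hp : IsStarProjection p)
    (hu : u ∈ coneK 𝒜 U p)
    (hmin : ∀ w ∈ coneK 𝒜 U p, LinearMap.ker u.mulVecLin ≤ LinearMap.ker w.mulVecLin) :
    coneK 𝒜 U (kernelProjection u) = coneK 𝒜 U p := by
  obtain ⟨-, hpsd, hup⟩ := (mem_coneK_iff hU hp).mp hu
  have hq := isStarProjection_kernelProjection hpsd.isHermitian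
  ext w
  rw [mem_coneK_iff hU hq, mem_coneK_iff hU hp]
  refine ⟨fun ⟨hw, hwpsd, hwq⟩ => ⟨hw, hwpsd, ?_⟩, fun hwK => ⟨hwK.1, hwK.2.1, ?_⟩⟩
  · rw [← kernelProjection_mul_eq hpsd.isHermitian hup, ← mul_assoc, hwq, zero_mul]
  · refine ext_of_mulVec_single fun i => ?_
    have hker := hmin w ((mem_coneK_iff hU hp).mpr hwK)
      (x := kernelProjection u *ᵥ Pi.single i 1)
    simp only [LinearMap.mem_ker, mulVecLin_apply, mulVec_mulVec,
      mul_kernelProjection hpsd.isHermitian, zero_mulVec, forall_const] at hker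
    rw [hker, zero_mulVec]

end Cone

theorem stmt9_general {n : ℕ} (𝒜 : StarSubalgebra ℂ (Matrix (Fin n) (Fin n) ℂ))
    (U : Submodule ℝ (Matrix (Fin n) (Fin n) ℂ))
    (hU : ∀ u ∈ U, u ∈ 𝒜 ∧ uᴴ = u)
    (h1 : (1 : Matrix (Fin n) (Fin n) ℂ) ∈ U)
    (p : Matrix (Fin n) (Fin n) ℂ) (hpH : pᴴ = p) (hpi : p * p = p) :
    (p = 0 ∨ ∃ u ∈ U, Set.range p.mulVec = groundSpaceSet u) ↔
      (∀ q : Matrix (Fin n) (Fin n) ℂ, q ∈ 𝒜 → qᴴ = q → q * q = q →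
        coneK 𝒜 U q = coneK 𝒜 U p → (p - q).PosSemidef) := by
  have hU𝒜 : ∀ u ∈ U, u ∈ 𝒜 := fun u hu => (hU u hu).1
  have hp : IsStarProjection p := ⟨hpi, hpH⟩
  constructor
  · intro hground q _ hqH hqi hK
    obtain ⟨v, hv, hker⟩ : ∃ v ∈ coneK 𝒜 U p, ∀ x, v *ᵥ x = 0 → x ∈ Set.range p.mulVec := by
      rcases hground with rfl | ⟨u, hu, hrange⟩
      · exact ⟨1, (mem_coneK_iff hU𝒜 hp).mpr ⟨h1, .one, mul_zero 1⟩,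
          fun x hx => ⟨0, by rw [mulVec_zero, ← hx, one_mulVec]⟩⟩
      · exact exists_mem_coneK_of_range_eq_groundSpaceSet hU𝒜 h1 hp hu (hU u hu).2 hrange
    exact Matrix.le_iff.mp (le_of_coneK_eq hU𝒜 hp ⟨hqi, hqH⟩ hv hker hK)
  · intro hmax
    obtain ⟨u, hu, hmin⟩ := exists_ker_le_ker_of_add_mem
      (fun w hw => ((mem_coneK_iff hU𝒜 hp).mp hw).2.1)
      (fun v hv w hw => add_mem_coneK hU𝒜 hp hv hw)
      ⟨0, (mem_coneK_iff hU𝒜 hp).mpr ⟨zero_mem U, .zero, zero_mul p⟩⟩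
    obtain ⟨huU, hpsd, hup⟩ := (mem_coneK_iff hU𝒜 hp).mp hu
    have hq := isStarProjection_kernelProjection hpsd.isHermitian
    have hpq : p = kernelProjection u := le_antisymm
      (hp.le_of_mul_eq_right hq (kernelProjection_mul_eq hpsd.isHermitian hup))
      (Matrix.le_iff.mpr (hmax _ (kernelProjection_mem (hU𝒜 u huU)) hq.isSelfAdjoint
        hq.isIdempotentElem (coneK_kernelProjection_eq hU𝒜 hp hu hmin)))
    refine (eq_zero_or_range_eq_groundSpaceSet hpsd ?_).imp_right fun h => ⟨u, huU, h⟩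
    rw [hpq, range_kernelProjection hpsd.isHermitian]

/-- variation principle for ground spaces.  Let `𝒜 ⊆ Mₙ(ℂ)` be a
*-subalgebra with identity, `U` a real subspace of hermitian matrices in `𝒜` with
`id ∈ U`.  A projection `p ∈ 𝒜` is the ground projection of some element of `U`
(or zero) if and only if `p` is the greatest element, in the Löwner order, of the set
`{q projection in 𝒜 | K(q) = K(p)}`.  Being the ground projection of `u` is expressed
by the image of `p` being the ground space of `u`. -/
theorem stmt9 {n : ℕ} (𝒜 : StarSubalgebra ℂ (Matrix (Fin n) (Fin n) ℂ))
    (U : Submodule ℝ (Matrix (Fin n) (Fin n) ℂ))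
    (hU : ∀ u ∈ U, u ∈ 𝒜 ∧ uᴴ = u)
    (h1 : (1 : Matrix (Fin n) (Fin n) ℂ) ∈ U)
    (p : Matrix (Fin n) (Fin n) ℂ) (hp : p ∈ 𝒜) (hpH : pᴴ = p) (hpi : p * p = p) :
    (p = 0 ∨ ∃ u ∈ U, Set.range p.mulVec = groundSpaceSet u) ↔
      (∀ q : Matrix (Fin n) (Fin n) ℂ, q ∈ 𝒜 → qᴴ = q → q * q = q →
        coneK 𝒜 U q = coneK 𝒜 U p → (p - q).PosSemidef) :=
  stmt9_general 𝒜 U hU h1 p hpH hpi
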